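/- Let n ≥ 1 and consider the matrix game U ∈ ℝ^{n×n}. Then (e₁, e₁) is the unique Nash equilibrium of U: a pair (p,q) ∈ Δ_n × Δ_n is a Nash equilibrium of U if and only if p = e₁ and q = e₁. -/

import Mathlib

open Finset

/-- The matrix `U`: zeros on the diagonal, `-2` just above it, `2` just below it,
`-1` further above, `1` further below. -/
def Umat (n : ℕ) : Matrix (Fin n) (Fin n) ℝ := fun i j =>
  if (i : ℕ) = j then 0
  else if (j : ℕ) = i + 1 then -2
  else if (i : ℕ) = j + 1 then 2
  else if (i : ℕ) < j then -1
  else 1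

/-- `(p, q)` is a Nash equilibrium of the matrix game `M`
(row player minimizes, column player maximizes):
`M(p,q) - BRVal_r(q) ≤ 0` and `BRVal_c(p) - M(p,q) ≤ 0`. -/
def IsNE {n : ℕ} (M : Matrix (Fin n) (Fin n) ℝ) (p q : Fin n → ℝ) : Prop :=
  (∑ i, ∑ j, p i * M i j * q j) - (⨅ i, ∑ j, M i j * q j) ≤ 0 ∧
  (⨆ j, ∑ i, p i * M i j) - (∑ i, ∑ j, p i * M i j * q j) ≤ 0

lemma Umat_skew (n : ℕ) (i j : Fin n) : Umat n j i = - Umat n i j := by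
  simp only [Umat]
  split_ifs <;> first | omega | contradiction | norm_num

lemma Umat_quad (n : ℕ) (x : Fin n → ℝ) :
    ∑ i, ∑ j, x i * Umat n i j * x j = 0 := by
  have h : (∑ i, ∑ j, x i * Umat n i j * x j)
      = -(∑ i, ∑ j, x i * Umat n i j * x j) := by
    conv_lhs => rw [Finset.sum_comm]
    rw [← Finset.sum_neg_distrib]
    apply Finset.sum_congr rfl
    intro a _
    rw [← Finset.sum_neg_distrib]
    apply Finset.sum_congr rfl
    intro b _
    rw [Umat_skew]; ring
  linarith

lemma Umat_row0 (n : ℕ) (j : Fin (n+1)) (hj : j ≠ 0) : Umat (n+1) 0 j < 0 := by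
  have hj' : (j : ℕ) ≠ 0 := fun h => hj (Fin.ext h)
  simp only [Umat, Fin.val_zero]
  split_ifs <;> first | omega | contradiction | (norm_num <;> split_ifs <;> first | exact absurd (Fin.pos_iff_ne_zero.mpr hj) ‹_› | norm_num)

lemma Umat_col0 (n : ℕ) (i : Fin (n+1)) (hi : i ≠ 0) : 0 < Umat (n+1) i 0 := by
  have hi' : (i : ℕ) ≠ 0 := fun h => hi (Fin.ext h)
  simp only [Umat, Fin.val_zero]
  split_ifs <;> first | omega | contradiction | (norm_num <;> split_ifs <;> norm_num)

lemma Umat_00 (n : ℕ) : Umat (n+1) 0 0 = 0 := by simp [Umat]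

lemma sum_mul_single {m : ℕ} (f : Fin (m+1) → ℝ) :
    ∑ j, f j * (Pi.single (0 : Fin (m+1)) (1:ℝ) : Fin (m+1) → ℝ) j = f 0 := by
  rw [Finset.sum_eq_single (0 : Fin (m+1))]
  · simp
  · intro b _ hb; simp [Pi.single_apply, hb]
  · intro h; exact absurd (Finset.mem_univ _) h

lemma sum_single_mul {m : ℕ} (f : Fin (m+1) → ℝ) :
    ∑ i, (Pi.single (0 : Fin (m+1)) (1:ℝ) : Fin (m+1) → ℝ) i * f i = f 0 := by
  rw [Finset.sum_eq_single (0 : Fin (m+1))]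
  · simp
  · intro b _ hb; simp [Pi.single_apply, hb]
  · intro h; exact absurd (Finset.mem_univ _) h

/-- `(e₁, e₁)` is the unique Nash equilibrium of the game `U` (of size `n+1 ≥ 1`):
a pair `(p, q) ∈ Δ × Δ` is a Nash equilibrium iff `p = e₁` and `q = e₁`. -/
theorem Umat_unique_NE (n : ℕ) (p q : Fin (n + 1) → ℝ)
    (hp0 : ∀ i, 0 ≤ p i) (hp1 : ∑ i, p i = 1)
    (hq0 : ∀ j, 0 ≤ q j) (hq1 : ∑ j, q j = 1) :
    IsNE (Umat (n + 1)) p q ↔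
      (p = Pi.single (0 : Fin (n + 1)) 1 ∧ q = Pi.single (0 : Fin (n + 1)) 1) := by
  set M := Umat (n+1) with hM
  set A : Fin (n+1) → ℝ := fun i => ∑ j, M i j * q j with hA
  set B : Fin (n+1) → ℝ := fun j => ∑ i, p i * M i j with hB
  set V : ℝ := ∑ i, ∑ j, p i * M i j * q j with hV
  constructor
  · rintro ⟨h1, h2⟩
    -- V ≤ A i for all i
    have hVA : ∀ i, V ≤ A i := fun i =>
      le_trans (by linarith) (ciInf_le (Set.Finite.bddBelow (Set.finite_range A)) i)
    have hBV : ∀ j, B j ≤ V := fun j =>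
      le_trans (le_ciSup (Set.Finite.bddAbove (Set.finite_range B)) j) (by linarith)
    -- V ≤ 0
    have hqA : ∑ i, q i * A i = 0 := by
      simp only [hA, Finset.mul_sum]
      rw [show (∑ i, ∑ j, q i * (M i j * q j)) = ∑ i, ∑ j, q i * M i j * q j by
        exact Finset.sum_congr rfl fun i _ => Finset.sum_congr rfl fun j _ => by ring]
      exact Umat_quad (n+1) q
    have hVle : V ≤ 0 := by
      have : ∑ i, q i * V ≤ ∑ i, q i * A i :=
        Finset.sum_le_sum fun i _ => mul_le_mul_of_nonneg_left (hVA i) (hq0 i)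
      rw [← Finset.sum_mul, hq1, one_mul] at this
      linarith
    have hpB : ∑ j, p j * B j = 0 := by
      simp only [hB, Finset.mul_sum]
      rw [Finset.sum_comm]
      rw [show (∑ i, ∑ j, p j * (p i * M i j)) = ∑ i, ∑ j, p i * M i j * p j by
        exact Finset.sum_congr rfl fun i _ => Finset.sum_congr rfl fun j _ => by ring]
      exact Umat_quad (n+1) p
    have hVge : 0 ≤ V := by
      have : ∑ j, p j * B j ≤ ∑ j, p j * V :=
        Finset.sum_le_sum fun j _ => mul_le_mul_of_nonneg_left (hBV j) (hp0 j)
      rw [← Finset.sum_mul, hp1, one_mul] at this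
      linarith
    have hV0 : V = 0 := le_antisymm hVle hVge
    -- q = e0
    have hq : q = Pi.single (0 : Fin (n+1)) 1 := by
      have hA0 : (0:ℝ) ≤ A 0 := hV0 ▸ hVA 0
      have hterm : ∀ j ∈ Finset.univ, M 0 j * q j ≤ 0 := by
        intro j _
        by_cases hj : j = 0
        · subst hj; rw [hM, Umat_00]; simp
        · exact mul_nonpos_of_nonpos_of_nonneg (le_of_lt (Umat_row0 n j hj)) (hq0 j)
      have hsum0 : A 0 = 0 := le_antisymm (Finset.sum_nonpos hterm) hA0
      have hz : ∀ j ∈ Finset.univ, M 0 j * q j = 0 :=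
        (Finset.sum_eq_zero_iff_of_nonpos hterm).mp hsum0
      have hqz : ∀ j : Fin (n+1), j ≠ 0 → q j = 0 := by
        intro j hj
        have := hz j (Finset.mem_univ j)
        have hne : M 0 j ≠ 0 := ne_of_lt (Umat_row0 n j hj)
        exact (mul_eq_zero.mp this).resolve_left hne
      have hq0v : q 0 = 1 := by
        rw [← hq1, Finset.sum_eq_single 0]
        · exact fun b _ hb => hqz b hb
        · intro h; exact absurd (Finset.mem_univ 0) h
      funext j
      by_cases hj : j = 0
      · subst hj; simp [hq0v]
      · simp [Pi.single_apply, hj, hqz j hj]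
    have hp : p = Pi.single (0 : Fin (n+1)) 1 := by
      have hB0 : B 0 ≤ 0 := hV0 ▸ hBV 0
      have hterm : ∀ i ∈ Finset.univ, 0 ≤ p i * M i 0 := by
        intro i _
        by_cases hi : i = 0
        · subst hi; rw [hM, Umat_00]; simp
        · exact mul_nonneg (hp0 i) (le_of_lt (Umat_col0 n i hi))
      have hsum0 : B 0 = 0 := le_antisymm hB0 (Finset.sum_nonneg hterm)
      have hz : ∀ i ∈ Finset.univ, p i * M i 0 = 0 :=
        (Finset.sum_eq_zero_iff_of_nonneg hterm).mp hsum0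
      have hpz : ∀ i : Fin (n+1), i ≠ 0 → p i = 0 := by
        intro i hi
        have := hz i (Finset.mem_univ i)
        have hne : M i 0 ≠ 0 := (ne_of_lt (Umat_col0 n i hi)).symm
        exact (mul_eq_zero.mp this).resolve_right hne
      have hp0v : p 0 = 1 := by
        rw [← hp1, Finset.sum_eq_single 0]
        · exact fun b _ hb => hpz b hb
        · intro h; exact absurd (Finset.mem_univ 0) h
      funext i
      by_cases hi : i = 0
      · subst hi; simp [hp0v]
      · simp [Pi.single_apply, hi, hpz i hi]
    exact ⟨hp, hq⟩
  · rintro ⟨hp, hq⟩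
    subst hp; subst hq
    have hVeq : V = 0 := by
      rw [hV]
      have h1 : ∀ i : Fin (n+1),
          (∑ j, (Pi.single (0:Fin (n+1)) (1:ℝ) : Fin (n+1) → ℝ) i * M i j * (Pi.single (0:Fin (n+1)) (1:ℝ) : Fin (n+1) → ℝ) j)
            = (Pi.single (0:Fin (n+1)) (1:ℝ) : Fin (n+1) → ℝ) i * M i 0 :=
        fun i => sum_mul_single (fun j => (Pi.single (0:Fin (n+1)) (1:ℝ) : Fin (n+1) → ℝ) i * M i j)
      rw [Finset.sum_congr rfl (fun i _ => h1 i),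
        sum_single_mul (fun i => M i 0), hM, Umat_00]
    have hAi : ∀ i, (0:ℝ) ≤ A i := by
      intro i
      have hAe : A i = M i 0 := sum_mul_single (fun j => M i j)
      rw [hAe]
      by_cases hi : i = 0
      · subst hi; rw [hM, Umat_00]
      · exact le_of_lt (Umat_col0 n i hi)
    have hBj : ∀ j, B j ≤ 0 := by
      intro j
      have hBe : B j = M 0 j := sum_single_mul (fun i => M i j)
      rw [hBe]
      by_cases hj : j = 0
      · subst hj; rw [hM, Umat_00]
      · exact le_of_lt (Umat_row0 n j hj)
    constructor
    · have : (0:ℝ) ≤ ⨅ i, A i := le_ciInf hAi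
      linarith [hVeq]
    · have : (⨆ j, B j) ≤ 0 := ciSup_le hBj
      linarith [hVeq]
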